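/- Let A be a locally-complex algebra with dim A = n > 2, S a generating set, and (m_0, ..., m_{n−1}) the characteristic sequence of S. For each index h with m_h ≥ 2, there exist indices 0 < t₁ < t₂ < h (strictly distinct) with m_h = m_{t₁} + m_{t₂}. -/
import Mathlib

set_option linter.unusedSectionVars false
set_option linter.unusedVariables false

/-- Words in a finite subset `S` of a (not necessarily associative) unital algebra:
`IsWord S n a` means `a` is a product (with some bracketing) of `n` elements of `S`,
where `1` is the unique word of length `0`. -/
inductive IsWord {A : Type*} [NonAssocRing A] (S : Set A) : ℕ → A → Prop
  | one : IsWord S 0 1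
  | base : ∀ a, a ∈ S → IsWord S 1 a
  | mul : ∀ {m n : ℕ} {a b : A}, 0 < m → 0 < n → IsWord S m a → IsWord S n b →
      IsWord S (m + n) (a * b)

/-- `Lspan F S k` is the `F`-linear span of all words in `S` of length at most `k`. -/
def Lspan (F : Type*) {A : Type*} [Field F] [NonAssocRing A] [Module F A]
    (S : Set A) (k : ℕ) : Submodule F A :=
  Submodule.span F {a | ∃ m ≤ k, IsWord S m a}

/-- `S` generates the algebra `A` iff the union of all the `Lspan F S k` is all of `A`. -/
def Generates (F : Type*) {A : Type*} [Field F] [NonAssocRing A] [Module F A]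
    (S : Set A) : Prop :=
  (⨆ k, Lspan F S k) = ⊤

/-- The length of a generating set: the least `k` with `Lspan F S k = ⊤`. -/
noncomputable def len (F : Type*) {A : Type*} [Field F] [NonAssocRing A] [Module F A]
    (S : Set A) : ℕ :=
  sInf {k | Lspan F S k = ⊤}

/-- The length of the algebra: the maximum of `len F S` over all finite generating sets. -/
noncomputable def algLen (F : Type*) (A : Type*) [Field F] [NonAssocRing A] [Module F A] : ℕ :=
  sSup {l | ∃ S : Set A, S.Finite ∧ Generates F S ∧ len F S = l}

/-- `w` is a fresh word of length `n` in `S`: a word of length `n` lying in no `Lspan F S m`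
for `m < n`. -/
def Fresh (F : Type*) {A : Type*} [Field F] [NonAssocRing A] [Module F A]
    (S : Set A) (n : ℕ) (w : A) : Prop :=
  IsWord S n w ∧ ∀ m < n, w ∉ Lspan F S m

/-- `(m 0, m 1, …, m N)` is the characteristic sequence of `S`: a non-decreasing sequence
with `m 0 = 0` in which each `k ≥ 1` occurs exactly
`dim Lspan F S k − dim Lspan F S (k-1)` times. -/
def IsCharSeq (F : Type*) {A : Type*} [Field F] [NonAssocRing A] [Module F A]
    (S : Set A) (N : ℕ) (m : ℕ → ℕ) : Prop :=
  m 0 = 0 ∧ (∀ i j, i ≤ j → j ≤ N → m i ≤ m j) ∧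
  (∀ t, 1 ≤ t → t ≤ N → 1 ≤ m t) ∧
  ∀ k, 1 ≤ k →
    ((Finset.range (N + 1)).filter (fun t => m t = k)).card
      = Module.finrank F (Lspan F S k) - Module.finrank F (Lspan F S (k - 1))

/-- A locally-complex algebra: a finite-dimensional unital real (not necessarily associative)
algebra that is quadratic (every `a` satisfies `a² = u•1 + v•a`) and has no nontrivial
idempotents and no nonzero square-zero elements. -/
def LocallyComplex (A : Type*) [NonAssocRing A] [Module ℝ A] [SMulCommClass ℝ A A]
    [IsScalarTower ℝ A A] : Prop :=
  FiniteDimensional ℝ A ∧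
  (∀ a : A, ∃ u v : ℝ, a * a = u • (1 : A) + v • a) ∧
  (∀ a : A, a * a = a → a = 0 ∨ a = 1) ∧
  (∀ a : A, a * a = 0 → a = 0)

section Aux

variable {A : Type*} [NonAssocRing A] [Module ℝ A] [SMulCommClass ℝ A A] [IsScalarTower ℝ A A]
  {S : Set A}

lemma isWord_zero' {n : ℕ} {a : A} (h : IsWord S n a) (hn : n = 0) : a = 1 := by
  cases h with
  | one => rfl
  | base a ha => omega
  | mul hm hn' _ _ => omega

lemma isWord_zero {a : A} (h : IsWord S 0 a) : a = 1 := isWord_zero' h rfl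

lemma isWord_decomp {k : ℕ} {a : A} (h : IsWord S k a) (hk : 2 ≤ k) :
    ∃ p q u v, 0 < p ∧ 0 < q ∧ p + q = k ∧ IsWord S p u ∧ IsWord S q v ∧ a = u * v := by
  cases h with
  | one => omega
  | base a ha => omega
  | mul hm hn hu hv => exact ⟨_, _, _, _, hm, hn, rfl, hu, hv, rfl⟩

lemma word_mem_Lspan {k p : ℕ} {a : A} (hp : p ≤ k) (hw : IsWord S p a) :
    a ∈ Lspan ℝ S k :=
  Submodule.subset_span ⟨p, hp, hw⟩

lemma Lspan_mono {i j : ℕ} (hij : i ≤ j) : Lspan ℝ S i ≤ Lspan ℝ S j :=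
  Submodule.span_mono (fun a ⟨p, hp, hw⟩ => ⟨p, hp.trans hij, hw⟩)

lemma Lspan_mul {i j : ℕ} {x y : A} (hx : x ∈ Lspan ℝ S i) (hy : y ∈ Lspan ℝ S j) :
    x * y ∈ Lspan ℝ S (i + j) := by
  induction hx using Submodule.span_induction with
  | mem a ha =>
    induction hy using Submodule.span_induction with
    | mem b hb =>
      obtain ⟨p, hp, hw⟩ := ha
      obtain ⟨q, hq, hw'⟩ := hb
      rcases Nat.eq_zero_or_pos p with rfl | hp0
      · rw [isWord_zero hw, one_mul]
        exact word_mem_Lspan (by omega) hw'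
      rcases Nat.eq_zero_or_pos q with rfl | hq0
      · rw [isWord_zero hw', mul_one]
        exact word_mem_Lspan (by omega) hw
      exact word_mem_Lspan (by omega) (IsWord.mul hp0 hq0 hw hw')
    | zero => rw [mul_zero]; exact zero_mem _
    | add b c _ _ hb hc => rw [mul_add]; exact add_mem hb hc
    | smul c b _ hb => rw [mul_smul_comm]; exact Submodule.smul_mem _ _ hb
  | zero => rw [zero_mul]; exact zero_mem _
  | add a b _ _ ha hb => rw [add_mul]; exact add_mem ha hb
  | smul c a _ ha => rw [smul_mul_assoc]; exact Submodule.smul_mem _ _ ha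

end Aux

theorem stmt_15 (A : Type*) [NonAssocRing A] [Module ℝ A]
    [SMulCommClass ℝ A A] [IsScalarTower ℝ A A] (hA : LocallyComplex A)
    (S : Set A) (hS : S.Finite) (hgen : Generates ℝ S) (n : ℕ)
    (hdim : Module.finrank ℝ A = n) (hn : 2 < n)
    (m : ℕ → ℕ) (hm : IsCharSeq ℝ S (n - 1) m) :
    ∀ h, h ≤ n - 1 → 2 ≤ m h →
      ∃ t₁ t₂, 0 < t₁ ∧ t₁ < t₂ ∧ t₂ < h ∧ m h = m t₁ + m t₂ := by
  haveI : FiniteDimensional ℝ A := hA.1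
  obtain ⟨-, hquad, -, -⟩ := hA
  obtain ⟨hm0, hmono, hpos, hcard⟩ := hm
  set N := n - 1 with hN
  intro h hh hmh
  set k := m h with hk
  -- k occurs in the sequence, so dim L_{k-1} < dim L_k
  have hhf : h ∈ (Finset.range (N + 1)).filter (fun t => m t = k) := by
    refine Finset.mem_filter.mpr ⟨Finset.mem_range.mpr (by omega), rfl⟩
  have hcard1 : 1 ≤ ((Finset.range (N + 1)).filter (fun t => m t = k)).card :=
    Finset.card_pos.mpr ⟨h, hhf⟩
  have hdimk : Module.finrank ℝ (Lspan ℝ S (k - 1)) < Module.finrank ℝ (Lspan ℝ S k) := by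
    have := hcard k (by omega)
    omega
  -- there is a fresh word of length k
  have hne : ¬ (Lspan ℝ S k ≤ Lspan ℝ S (k - 1)) := by
    intro hle
    have := Submodule.finrank_mono (R := ℝ) hle
    omega
  have hex : ∃ a ∈ {a : A | ∃ p ≤ k, IsWord S p a}, a ∉ Lspan ℝ S (k - 1) := by
    by_contra hc
    push_neg at hc
    exact hne (Submodule.span_le.mpr hc)
  obtain ⟨a, ⟨p0, hp0, hw0⟩, hafresh⟩ := hex
  have hp0k : p0 = k := by
    by_contra hne'
    exact hafresh (word_mem_Lspan (by omega) hw0)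
  subst hp0k
  -- decompose it
  obtain ⟨p, q, u, v, hp, hq, hpq, hu, hv, rfl⟩ := isWord_decomp hw0 (by omega)
  -- both factors are fresh
  have hufresh : u ∉ Lspan ℝ S (p - 1) := by
    intro hmem
    exact hafresh (Lspan_mono (show p - 1 + q ≤ k - 1 by omega)
      (Lspan_mul hmem (word_mem_Lspan le_rfl hv)))
  have hvfresh : v ∉ Lspan ℝ S (q - 1) := by
    intro hmem
    exact hafresh (Lspan_mono (show p + (q - 1) ≤ k - 1 by omega)
      (Lspan_mul (word_mem_Lspan le_rfl hu) hmem))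
  -- a fresh word at level r forces r to occur in the sequence
  have key : ∀ r : ℕ, 1 ≤ r → ∀ w : A, IsWord S r w → w ∉ Lspan ℝ S (r - 1) →
      1 ≤ ((Finset.range (N + 1)).filter (fun t => m t = r)).card := by
    intro r hr w hwr hwf
    have hlt : Lspan ℝ S (r - 1) < Lspan ℝ S r := by
      refine lt_of_le_of_ne (Lspan_mono (by omega)) ?_
      intro e
      exact hwf (e ▸ word_mem_Lspan le_rfl hwr)
    have := Submodule.finrank_lt_finrank_of_lt (K := ℝ) hlt
    have := hcard r hr
    omega
  -- helper facts about indices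
  have hidx : ∀ r : ℕ, ∀ t ∈ (Finset.range (N + 1)).filter (fun t => m t = r),
      1 ≤ r → r < k → 0 < t ∧ t < h := by
    intro r t ht hr1 hrk
    simp only [Finset.mem_filter, Finset.mem_range] at ht
    obtain ⟨htN, htr⟩ := ht
    constructor
    · rcases Nat.eq_zero_or_pos t with rfl | h0
      · omega
      · exact h0
    · by_contra hc
      push_neg at hc
      have := hmono h t hc (by omega)
      omega
  rcases lt_trichotomy p q with hlt | heq | hlt
  · -- p < q
    obtain ⟨t₁, ht₁⟩ := Finset.card_pos.mp (key p (by omega) u hu hufresh)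
    obtain ⟨t₂, ht₂⟩ := Finset.card_pos.mp (key q (by omega) v hv hvfresh)
    have h1 := hidx p t₁ ht₁ (by omega) (by omega)
    have h2 := hidx q t₂ ht₂ (by omega) (by omega)
    simp only [Finset.mem_filter, Finset.mem_range] at ht₁ ht₂
    have ht12 : t₁ < t₂ := by
      by_contra hc
      push_neg at hc
      have := hmono t₂ t₁ hc (by omega)
      omega
    exact ⟨t₁, t₂, h1.1, ht12, h2.2, by omega⟩
  · -- p = q
    subst heq
    by_cases h2 : 2 ≤ ((Finset.range (N + 1)).filter (fun t => m t = p)).card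
    · obtain ⟨t₁, ht₁, t₂, ht₂, hne12⟩ := Finset.one_lt_card.mp h2
      have h1 := hidx p t₁ ht₁ (by omega) (by omega)
      have h2' := hidx p t₂ ht₂ (by omega) (by omega)
      simp only [Finset.mem_filter, Finset.mem_range] at ht₁ ht₂
      rcases lt_or_gt_of_ne hne12 with hlt12 | hlt12
      · exact ⟨t₁, t₂, h1.1, hlt12, h2'.2, by omega⟩
      · exact ⟨t₂, t₁, h2'.1, hlt12, h1.2, by omega⟩
    · -- only one fresh direction at level p: contradiction with quadraticity
      exfalso
      have hc1 := key p (by omega) u hu hufresh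
      have hcp := hcard p (by omega)
      have hdimp : Module.finrank ℝ (Lspan ℝ S p)
          = Module.finrank ℝ (Lspan ℝ S (p - 1)) + 1 := by
        have hle := Submodule.finrank_mono (R := ℝ) (Lspan_mono (show p - 1 ≤ p by omega) (S := S))
        omega
      have hup : u ∈ Lspan ℝ S p := word_mem_Lspan le_rfl hu
      have hsup_le : Lspan ℝ S (p - 1) ⊔ Submodule.span ℝ {u} ≤ Lspan ℝ S p :=
        sup_le (Lspan_mono (by omega)) (Submodule.span_le.mpr (by simpa using hup))
      have hslt : Lspan ℝ S (p - 1) < Lspan ℝ S (p - 1) ⊔ Submodule.span ℝ {u} := by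
        refine lt_of_le_of_ne le_sup_left ?_
        intro e
        exact hufresh (e ▸ Submodule.mem_sup_right (Submodule.mem_span_singleton_self u))
      have hd2 := Submodule.finrank_lt_finrank_of_lt (K := ℝ) hslt
      have heq : Lspan ℝ S (p - 1) ⊔ Submodule.span ℝ {u} = Lspan ℝ S p := by
        refine Submodule.eq_of_le_of_finrank_le hsup_le ?_
        omega
      have hvp : v ∈ Lspan ℝ S (p - 1) ⊔ Submodule.span ℝ {u} := by
        rw [heq]; exact word_mem_Lspan le_rfl hv
      obtain ⟨w, hw, z, hz, hvw⟩ := Submodule.mem_sup.mp hvp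
      obtain ⟨c, rfl⟩ := Submodule.mem_span_singleton.mp hz
      obtain ⟨α, β, huu⟩ := hquad u
      apply hafresh
      have h1mem : (1 : A) ∈ Lspan ℝ S (k - 1) := word_mem_Lspan (by omega) IsWord.one
      have humem : u ∈ Lspan ℝ S (k - 1) := word_mem_Lspan (by omega) hu
      have huumem : u * u ∈ Lspan ℝ S (k - 1) := by
        rw [huu]
        exact add_mem (Submodule.smul_mem _ _ h1mem) (Submodule.smul_mem _ _ humem)
      have huwmem : u * w ∈ Lspan ℝ S (k - 1) :=
        Lspan_mono (show p + (p - 1) ≤ k - 1 by omega) (Lspan_mul hup hw)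
      have : u * v = u * w + c • (u * u) := by
        rw [← hvw, mul_add, mul_smul_comm]
      rw [this]
      exact add_mem huwmem (Submodule.smul_mem _ _ huumem)
  · -- q < p
    obtain ⟨t₁, ht₁⟩ := Finset.card_pos.mp (key q (by omega) v hv hvfresh)
    obtain ⟨t₂, ht₂⟩ := Finset.card_pos.mp (key p (by omega) u hu hufresh)
    have h1 := hidx q t₁ ht₁ (by omega) (by omega)
    have h2 := hidx p t₂ ht₂ (by omega) (by omega)
    simp only [Finset.mem_filter, Finset.mem_range] at ht₁ ht₂
    have ht12 : t₁ < t₂ := by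
      by_contra hc
      push_neg at hc
      have := hmono t₂ t₁ hc (by omega)
      omega
    exact ⟨t₁, t₂, h1.1, ht12, h2.2, by omega⟩
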